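/- arXiv:2603.01242 — 3 statements merged into one kernel-verified Lean document; each statement's English description precedes it below -/
import Mathlib

section
/- There exists a universal constant C > 0 such that for all integers n, W ≥ 1 and every real λ ≥ 0, P_{∞,W,n}(max C_π(0) > λ + 2W) ≤ C·W²·P_{∞,W,n}(max C_π(0) ∈ (λ, λ + 2W]). -/
open Finset

/-- The integer interval `[-n, n]`, as a type. -/
abbrev Box (n : ℕ) : Type := {x : ℤ // x ∈ Finset.Icc (-(n : ℤ)) (n : ℤ)}

/-- The point `0 ∈ [-n, n]`. -/
def boxZero (n : ℕ) : Box n :=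
  ⟨0, by simp⟩

/-- The maximum of the cycle of `j` under `π`, i.e. `max C_π(j)` where
`C_π(j) = {π^k(j) : k ∈ ℤ}`. -/
noncomputable def maxCycle {n : ℕ} (π : Equiv.Perm (Box n)) (j : Box n) : ℤ :=
  sSup {x : ℤ | ∃ k : ℤ, (((π ^ k) j : Box n) : ℤ) = x}

/-- The minimum of the cycle of `j` under `π`. -/
noncomputable def minCycle {n : ℕ} (π : Equiv.Perm (Box n)) (j : Box n) : ℤ :=
  sInf {x : ℤ | ∃ k : ℤ, (((π ^ k) j : Box n) : ℤ) = x}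

/-- The diameter of the cycle of `j` under `π`. -/
noncomputable def diamCycle {n : ℕ} (π : Equiv.Perm (Box n)) (j : Box n) : ℤ :=
  maxCycle π j - minCycle π j

/-- The Boltzmann–Gibbs weight `exp(-W^{-p} Σ_i |π(i) - i|^p)`. -/
noncomputable def gibbsWeight (p : ℝ) (W n : ℕ) (π : Equiv.Perm (Box n)) : ℝ :=
  Real.exp (-(W : ℝ) ^ (-p) * ∑ i : Box n, |((π i : ℤ) : ℝ) - ((i : ℤ) : ℝ)| ^ p)

open scoped Classical in
/-- The probability of the event `E` under the Gibbs measure `P_{p,W,n}`. -/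
noncomputable def gibbsProb (p : ℝ) (W n : ℕ) (E : Set (Equiv.Perm (Box n))) : ℝ :=
  (∑ π : Equiv.Perm (Box n), if π ∈ E then gibbsWeight p W n π else 0) /
    ∑ π : Equiv.Perm (Box n), gibbsWeight p W n π

/-- The probability of a single permutation under the Gibbs measure `P_{p,W,n}`. -/
noncomputable def gibbsP (p : ℝ) (W n : ℕ) (π : Equiv.Perm (Box n)) : ℝ :=
  gibbsWeight p W n π / ∑ σ : Equiv.Perm (Box n), gibbsWeight p W n σ

/-- The set `S_W` of permutations displacing each point by at most `W`. -/
def SW (n W : ℕ) : Set (Equiv.Perm (Box n)) :=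
  {π | ∀ i : Box n, |(π i : ℤ) - (i : ℤ)| ≤ (W : ℤ)}

open scoped Classical in
/-- The probability of the event `E` under the uniform measure `P_{∞,W,n}` on `S_W`. -/
noncomputable def unifProb (W n : ℕ) (E : Set (Equiv.Perm (Box n))) : ℝ :=
  ((Finset.univ.filter fun π : Equiv.Perm (Box n) => π ∈ SW n W ∧ π ∈ E).card : ℝ) /
    ((Finset.univ.filter fun π : Equiv.Perm (Box n) => π ∈ SW n W).card : ℝ)

/-- `Period(π, j)`: the least positive `m` with `π^m(j) = j`. -/
noncomputable def permPeriod {n : ℕ} (π : Equiv.Perm (Box n)) (j : Box n) : ℕ :=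
  sInf {m : ℕ | 0 < m ∧ (π ^ m) j = j}

/-- `i_first(π)` for the threshold `t`. -/
noncomputable def iFirst {n : ℕ} (t : ℝ) (π : Equiv.Perm (Box n)) : ℕ :=
  sInf {j : ℕ | ((((π ^ j) (boxZero n) : Box n) : ℤ) : ℝ) ≤ t ∧
    t < ((((π ^ (j + 1)) (boxZero n) : Box n) : ℤ) : ℝ)}

/-- `i_last(π)` for the threshold `t`. -/
noncomputable def iLast {n : ℕ} (t : ℝ) (π : Equiv.Perm (Box n)) : ℕ :=
  sSup {j : ℕ | j < permPeriod π (boxZero n) ∧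
    ((((π ^ (j + 1)) (boxZero n) : Box n) : ℤ) : ℝ) ≤ t ∧
    t < ((((π ^ j) (boxZero n) : Box n) : ℤ) : ℝ)}

/-- The uncrossing map `Φ_t(π) = π ∘ (π^{i_first+1}(0)  π^{i_last+1}(0))`. -/
noncomputable def Phi {n : ℕ} (t : ℝ) (π : Equiv.Perm (Box n)) : Equiv.Perm (Box n) :=
  π * Equiv.swap ((π ^ (iFirst t π + 1)) (boxZero n)) ((π ^ (iLast t π + 1)) (boxZero n))

/-!
Let `t = ⌊λ⌋ + W` and follow the cycle `0 = v₀, v₁, …, v_N = 0` of `0` under a `π ∈ S_W`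
whose maximum exceeds `t`. Let `vᵢ` be the point just before the first up-crossing of
level `t` and `v_l` the point just before the last down-crossing. Composing `π` with the
transposition `(vᵢ v_l)` cuts out the excursion `v_{i+1}, …, v_l`: the new cycle of `0` is
`v₀, …, vᵢ, v_{l+1}, …, v_{N-1}`, which stays below `t` but contains `vᵢ > t - W`, and the
new permutation still lies in `S_W` because both rewired jumps connect points in the same
window `(t - W, t]` or `(t, t + W]`. Since `π` is recovered from its image and the pair
`(vᵢ, v_l) ∈ (t - W, t] × (t, t + W]`, the map is at most `W²`-to-one.
-/

open Equiv

theorem exists_first_upcrossing {v : ℕ → ℤ} {t : ℤ} (h₀ : v 0 ≤ t) (h : ∃ m, t < v m) :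
    ∃ i, t < v (i + 1) ∧ ∀ k ≤ i, v k ≤ t := by
  classical
  have hfind : Nat.find h ≠ 0 := fun h0 => (Nat.find_spec h).not_ge (h0 ▸ h₀)
  refine ⟨Nat.find h - 1, ?_, fun k hk => not_lt.mp (Nat.find_min h (by omega))⟩
  rw [Nat.sub_add_cancel (Nat.one_le_iff_ne_zero.mpr hfind)]
  exact Nat.find_spec h

theorem exists_last_downcrossing {v : ℕ → ℤ} {t : ℤ} {N : ℕ} (hN : v N ≤ t)
    (h : ∃ m ≤ N, t < v m) : ∃ l < N, t < v l ∧ ∀ k, l < k → k ≤ N → v k ≤ t := by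
  classical
  obtain ⟨m, hmN, hm⟩ := h
  have hl : t < v (Nat.findGreatest (fun k => t < v k) N) :=
    Nat.findGreatest_spec (P := fun k => t < v k) hmN hm
  refine ⟨Nat.findGreatest (fun k => t < v k) N, ?_, hl, fun k hlk hkN =>
    not_lt.mp (Nat.findGreatest_is_greatest hlk hkN)⟩
  exact (Nat.findGreatest_le N).lt_of_ne fun hlN => hN.not_gt (hlN ▸ hl)

namespace Equiv.Perm

variable {α : Type*}

theorem pow_apply_eq_pow_apply_of_forall_lt {π σ : Perm α} {x : α} {m : ℕ}
    (h : ∀ k < m, σ ((π ^ k) x) = π ((π ^ k) x)) : (σ ^ m) x = (π ^ m) x := by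
  induction m with
  | zero => rfl
  | succ m ih =>
    rw [pow_succ', pow_succ', mul_apply, mul_apply, ih fun k hk => h k (by omega), h m (by omega)]

variable [DecidableEq α]

theorem card_le_card_mul_card_of_forall_exists_mul_swap {s u : Finset (Perm α)}
    {P : Finset (α × α)} (h : ∀ π ∈ s, ∃ p ∈ P, π * swap p.1 p.2 ∈ u) : #s ≤ #u * #P := by
  classical
  calc #s ≤ #((u ×ˢ P).image fun q => q.1 * swap q.2.1 q.2.2) := by
        refine card_le_card fun π hπ => ?_
        obtain ⟨p, hp, hπp⟩ := h π hπ
        exact mem_image.mpr ⟨(π * swap p.1 p.2, p), mem_product.mpr ⟨hπp, hp⟩, by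
          simp only [mul_assoc, swap_mul_self, mul_one]⟩
    _ ≤ #u * #P := card_image_le.trans (card_product u P).le

theorem abs_sub_le_of_mul_swap (f : α → ℤ) {W : ℤ} {π : Perm α} {a b : α}
    (hπ : ∀ y, |f (π y) - f y| ≤ W) (ha : |f (π b) - f a| ≤ W) (hb : |f (π a) - f b| ≤ W)
    (y : α) : |f ((π * swap a b) y) - f y| ≤ W := by
  rcases eq_or_ne y a with rfl | hya
  · simpa using ha
  rcases eq_or_ne y b with rfl | hyb
  · simpa using hb
  simpa [swap_apply_of_ne_of_ne hya hyb] using hπ y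

theorem mapsTo_mul_swap_pow_apply {π : Perm α} {x : α} {i l N : ℕ} (hN : (π ^ N) x = x)
    (hlN : l < N) (hb : ∀ k, (k ≤ i ∨ l < k ∧ k ≤ N) → (π ^ k) x ≠ (π ^ l) x) :
    Set.MapsTo (π * swap ((π ^ i) x) ((π ^ l) x))
      {y | ∃ k, (k ≤ i ∨ l < k ∧ k ≤ N) ∧ (π ^ k) x = y}
      {y | ∃ k, (k ≤ i ∨ l < k ∧ k ≤ N) ∧ (π ^ k) x = y} := by
  have hsucc : ∀ k, π ((π ^ k) x) = (π ^ (k + 1)) x := fun k => by rw [pow_succ', mul_apply]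
  rintro _ ⟨k, hk, rfl⟩
  by_cases ha : (π ^ k) x = (π ^ i) x
  · rw [ha, mul_apply, swap_apply_left, hsucc]
    exact ⟨l + 1, Or.inr ⟨l.lt_succ_self, hlN⟩, rfl⟩
  rw [mul_apply, swap_apply_of_ne_of_ne ha (hb k hk), hsucc]
  rcases hk with hki | ⟨hlk, hkN⟩
  · have hki' : k ≠ i := by rintro rfl; exact ha rfl
    exact ⟨k + 1, Or.inl (by omega), rfl⟩
  rcases hkN.lt_or_eq with hkN | rfl
  · exact ⟨k + 1, Or.inr ⟨Nat.lt_succ_of_lt hlk, hkN⟩, rfl⟩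
  -- `(π ^ N) x = x` wraps the orbit around to index `1`; `i = 0` would make `x` the swapped point
  refine ⟨1, Or.inl (Nat.one_le_iff_ne_zero.mpr fun hi => ha ?_), by rw [pow_one, ← hsucc, hN]⟩
  rw [hi, hN, pow_zero, one_apply]

theorem exists_mul_swap_cycle_le [Finite α] (f : α → ℤ) {W t : ℤ} {π : Perm α} {x : α}
    (hπ : ∀ y, |f (π y) - f y| ≤ W) (hx : f x ≤ t) (hexceed : ∃ m : ℕ, t < f ((π ^ m) x)) :
    ∃ a b : α, (t - W < f a ∧ f a ≤ t) ∧ (t < f b ∧ f b ≤ t + W) ∧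
      (∀ y, |f ((π * swap a b) y) - f y| ≤ W) ∧
      (∀ k : ℕ, f (((π * swap a b) ^ k) x) ≤ t) ∧
      ∃ k : ℕ, t - W < f (((π * swap a b) ^ k) x) := by
  set v : ℕ → ℤ := fun k => f ((π ^ k) x)
  have hstep : ∀ k, |v (k + 1) - v k| ≤ W := fun k => by
    simpa [v, pow_succ'] using hπ ((π ^ k) x)
  have hN : (π ^ orderOf π) x = x := by rw [pow_orderOf_eq_one, one_apply]
  obtain ⟨i, hi, hle_i⟩ := exists_first_upcrossing (v := v) hx hexceed
  obtain ⟨l, hlN, hl, hle_l⟩ := exists_last_downcrossing (v := v) (N := orderOf π)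
    (by simpa [v, hN] using hx) (by
      obtain ⟨m, hm⟩ := hexceed
      exact ⟨m % orderOf π, (Nat.mod_lt _ (orderOf_pos π)).le, by simpa [v, pow_mod_orderOf]⟩)
  have hS : ∀ k, (k ≤ i ∨ l < k ∧ k ≤ orderOf π) → v k ≤ t := by
    rintro k (hk | ⟨hlk, hkN⟩)
    exacts [hle_i k hk, hle_l k hlk hkN]
  have hne_b : ∀ k, v k ≤ t → (π ^ k) x ≠ (π ^ l) x := fun k hk h => by
    have : v k = v l := congrArg f h
    omega
  have hi_step := abs_le.mp (hstep i)
  have hl_step := abs_le.mp (hstep l)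
  have hl1 := hle_l (l + 1) (by omega) hlN
  have hvi : v i ≤ t := hle_i i le_rfl
  refine ⟨(π ^ i) x, (π ^ l) x, ⟨by change t - W < v i; omega, hvi⟩,
    ⟨hl, by change v l ≤ t + W; omega⟩, abs_sub_le_of_mul_swap f hπ ?_ ?_, fun k => ?_, i, ?_⟩
  · rw [← mul_apply, ← pow_succ']; change |v (l + 1) - v i| ≤ W
    exact abs_le.mpr ⟨by omega, by omega⟩
  · rw [← mul_apply, ← pow_succ']; change |v (i + 1) - v l| ≤ W
    exact abs_le.mpr ⟨by omega, by omega⟩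
  · obtain ⟨j, hj, hjk⟩ := (mapsTo_mul_swap_pow_apply hN hlN fun j hj => hne_b j (hS j hj)).iterate
      k ⟨0, Or.inl (Nat.zero_le i), by rw [pow_zero, one_apply]⟩
    rw [coe_pow, ← hjk]
    exact hS j hj
  · rw [pow_apply_eq_pow_apply_of_forall_lt fun k hk => ?_]
    · change t - W < v i; omega
    have hki : (π ^ k) x ≠ (π ^ i) x := fun h => by
      have : v (k + 1) = v (i + 1) := by simp only [v, pow_succ', mul_apply, h]
      have := hle_i (k + 1) hk
      omega
    rw [mul_apply, swap_apply_of_ne_of_ne hki (hne_b k (hle_i k hk.le))]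

end Equiv.Perm

section Box

open Perm

variable {n : ℕ}

theorem setOf_exists_zpow_apply_eq (π : Perm (Box n)) (j : Box n) :
    {z : ℤ | ∃ k : ℤ, (((π ^ k) j : Box n) : ℤ) = z} =
      Set.range fun k : ℕ => (((π ^ k) j : Box n) : ℤ) := by
  ext z
  constructor
  · rintro ⟨k, rfl⟩
    obtain ⟨m, hm⟩ :=
      SameCycle.exists_nat_pow_eq (show π.SameCycle j ((π ^ k) j) from ⟨k, rfl⟩)
    exact ⟨m, congrArg Subtype.val hm⟩
  · rintro ⟨m, rfl⟩
    exact ⟨m, by rw [zpow_natCast]⟩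

theorem bddAbove_range_pow_apply (π : Perm (Box n)) (j : Box n) :
    BddAbove (Set.range fun k : ℕ => (((π ^ k) j : Box n) : ℤ)) :=
  ((Set.finite_range (Subtype.val : Box n → ℤ)).subset
    (Set.range_subset_iff.mpr fun _ => ⟨_, rfl⟩)).bddAbove

theorem maxCycle_le_iff {π : Perm (Box n)} {j : Box n} {t : ℤ} :
    maxCycle π j ≤ t ↔ ∀ k : ℕ, (((π ^ k) j : Box n) : ℤ) ≤ t := by
  rw [maxCycle, setOf_exists_zpow_apply_eq, csSup_le_iff (bddAbove_range_pow_apply π j)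
    (Set.range_nonempty _), Set.forall_mem_range]

theorem lt_maxCycle_iff {π : Perm (Box n)} {j : Box n} {t : ℤ} :
    t < maxCycle π j ↔ ∃ k : ℕ, t < (((π ^ k) j : Box n) : ℤ) := by
  rw [maxCycle, setOf_exists_zpow_apply_eq, lt_csSup_iff (bddAbove_range_pow_apply π j)
    (Set.range_nonempty _), Set.exists_range_iff]

theorem card_subtype_Ioc_le (a b : ℤ) :
    #((Ioc a b).subtype (· ∈ Icc (-(n : ℤ)) n)) ≤ (b - a).toNat := by
  rw [card_subtype, ← Int.card_Ioc]
  exact card_filter_le _ _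

open scoped Classical in
theorem card_lt_maxCycle_le_mul_card (W : ℕ) {t : ℤ} (ht : 0 ≤ t) :
    #{π : Perm (Box n) | π ∈ SW n W ∧ t < maxCycle π (boxZero n)} ≤
      W ^ 2 * #{π : Perm (Box n) | π ∈ SW n W ∧
        t - W < maxCycle π (boxZero n) ∧ maxCycle π (boxZero n) ≤ t} := by
  set P := (Ioc (t - W) t).subtype (· ∈ Icc (-(n : ℤ)) n) ×ˢ
    (Ioc t (t + W)).subtype (· ∈ Icc (-(n : ℤ)) n)
  have hP : #P ≤ W ^ 2 := by
    rw [card_product, sq]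
    refine Nat.mul_le_mul ((card_subtype_Ioc_le _ _).trans ?_) ((card_subtype_Ioc_le _ _).trans ?_)
      <;> simp
  calc _ ≤ _ * #P := card_le_card_mul_card_of_forall_exists_mul_swap fun π hπ => ?_
    _ ≤ _ := by rw [mul_comm]; exact Nat.mul_le_mul_right _ hP
  obtain ⟨hSW, hmax⟩ := (mem_filter.mp hπ).2
  obtain ⟨a, b, ha, hb, hσSW, hσ_le, hσ_gt⟩ := exists_mul_swap_cycle_le Subtype.val
    (W := W) hSW (by simpa [boxZero] using ht) (lt_maxCycle_iff.mp hmax)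
  refine ⟨(a, b), by simp [P, ha, hb], mem_filter.mpr ⟨mem_univ _, hσSW, ?_, ?_⟩⟩
  · exact lt_maxCycle_iff.mpr hσ_gt
  · exact maxCycle_le_iff.mpr hσ_le

open scoped Classical in
theorem unifProb_mono {W : ℕ} {E F : Set (Perm (Box n))} (h : E ⊆ F) :
    unifProb W n E ≤ unifProb W n F := by
  refine div_le_div_of_nonneg_right ?_ (Nat.cast_nonneg _)
  refine Nat.cast_le.mpr (card_le_card fun π hπ => ?_)
  rw [mem_filter] at hπ ⊢
  exact ⟨hπ.1, hπ.2.1, h hπ.2.2⟩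

open scoped Classical in
theorem unifProb_lt_maxCycle_le (W : ℕ) {t : ℤ} (ht : 0 ≤ t) :
    unifProb W n {π | t < maxCycle π (boxZero n)} ≤
      W ^ 2 * unifProb W n {π | t - W < maxCycle π (boxZero n) ∧ maxCycle π (boxZero n) ≤ t} := by
  rw [unifProb, unifProb, mul_div_assoc']
  refine div_le_div_of_nonneg_right ?_ (Nat.cast_nonneg _)
  simp only [Set.mem_ofPred_eq]
  exact_mod_cast card_lt_maxCycle_le_mul_card W ht

end Box

/-- There is a universal constant `C > 0` such that for all integers
`n, W ≥ 1` and every real `λ ≥ 0`,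
`P_{∞,W,n}(max C_π(0) > λ + 2W) ≤ C W² P_{∞,W,n}(max C_π(0) ∈ (λ, λ + 2W])`. -/
theorem one_step_max_uniform :
    ∃ C : ℝ, 0 < C ∧ ∀ (n W : ℕ), 1 ≤ n → 1 ≤ W → ∀ lam : ℝ, 0 ≤ lam →
      unifProb W n {π | lam + 2 * W < ((maxCycle π (boxZero n) : ℤ) : ℝ)} ≤
        C * W ^ 2 *
          unifProb W n {π | lam < ((maxCycle π (boxZero n) : ℤ) : ℝ) ∧
            ((maxCycle π (boxZero n) : ℤ) : ℝ) ≤ lam + 2 * W} := by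
  refine ⟨1, one_pos, fun n W _ _ lam hlam => ?_⟩
  rw [one_mul]
  calc _ ≤ unifProb W n {π | ⌊lam⌋ + W < maxCycle π (boxZero n)} :=
        unifProb_mono (Set.ofPred_subset_ofPred.mpr fun π hπ => by
          rw [← Int.floor_add_natCast, Int.floor_lt]
          linarith)
    _ ≤ W ^ 2 * unifProb W n {π | ⌊lam⌋ + W - W < maxCycle π (boxZero n) ∧
          maxCycle π (boxZero n) ≤ ⌊lam⌋ + W} :=
        unifProb_lt_maxCycle_le W (by positivity)
    _ ≤ _ := by
        refine mul_le_mul_of_nonneg_left (unifProb_mono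
          (Set.ofPred_subset_ofPred.mpr fun π ⟨hgt, hle⟩ => ?_)) (by positivity)
        rw [add_sub_cancel_right, Int.floor_lt] at hgt
        rw [← Int.floor_add_natCast, Int.le_floor] at hle
        exact ⟨hgt, by linarith⟩
end

section
/- There exists a universal constant C > 0 such that for all integers n, W ≥ 1 and every real λ ≥ 0, P_{∞,W,n}(min C_π(0) < −λ − 2W) ≤ C·W²·P_{∞,W,n}(min C_π(0) ∈ [−λ − 2W, −λ)). -/
open Finset

/-!
Fix an integer level `s` with `-λ - 2W ≤ s + 1` and `s + W < -λ`. If the cycle of `0` under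
`π ∈ S_W` dips to `≤ s`, let `a` be the point from which it first steps down to `≤ s`, and `b` the
last point `≤ s` before the cycle returns to `a`. Steps have length at most `W`, so `a, π b` lie in
`(s, s + W]` and `b, π a` in `(s - W, s]`; hence `π * swap a b` is again in `S_W`. The
transposition cuts the cycle into two; the one through `0` is the arc `π b, …, a`, which lies
above `s` and contains `a ≤ s + W`, so its minimum is in `[-λ - 2W, -λ)`. Since `π` is recovered
from `π * swap a b` together with `a` and `b`, each confined to a window of `W` integers, the
claim holds with `C = 1`.
-/

open Equiv
open Function hiding swap

theorem Equiv.Perm.minimalPeriod_pos {α : Type*} [Finite α] (π : Perm α) (x : α) :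
    0 < minimalPeriod π x :=
  MulAction.period_pos_of_orderOf_pos (orderOf_pos π) x

theorem Function.Injective.iterate_ne_iterate_of_lt_add_minimalPeriod {α : Type*} {f : α → α}
    (hf : Injective f) (x : α) {m m' : ℕ} (h₁ : m' < m) (h₂ : m < m' + minimalPeriod f x) :
    f^[m] x ≠ f^[m'] x := by
  intro h
  have hper : IsPeriodicPt f (m - m') x :=
    hf.iterate m' (by rw [← iterate_add_apply, Nat.add_sub_cancel' h₁.le, h])
  have := hper.minimalPeriod_le (by omega)
  omega

section CycleSplitting

variable {α : Type*} [DecidableEq α] (π : Perm α) (x : α) {i j : ℕ}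

theorem mul_swap_apply_iterate_of_mem_Ioo (hij : i ≤ j) {m : ℕ}
    (hm : m ∈ Set.Ioo j (i + minimalPeriod π x)) :
    (π * swap (π^[i] x) (π^[j] x)) (π^[m] x) = π^[m + 1] x := by
  obtain ⟨hjm, hmi⟩ := hm
  have ha := π.injective.iterate_ne_iterate_of_lt_add_minimalPeriod x (by omega) hmi
  have hb := π.injective.iterate_ne_iterate_of_lt_add_minimalPeriod x hjm (by omega)
  rw [Perm.mul_apply, swap_apply_of_ne_of_ne ha hb, iterate_succ_apply']

theorem iterate_mul_swap_apply_iterate (hij : i ≤ j) {m k : ℕ} (hm : j < m)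
    (hk : m + k ≤ i + minimalPeriod π x) :
    (π * swap (π^[i] x) (π^[j] x))^[k] (π^[m] x) = π^[m + k] x := by
  induction k generalizing m with
  | zero => rfl
  | succ k ih =>
    rw [iterate_succ_apply, mul_swap_apply_iterate_of_mem_Ioo π x hij ⟨hm, by omega⟩,
      ih (by omega) (by omega), Nat.add_right_comm, Nat.add_assoc]

theorem mapsTo_mul_swap_arc (hij : i ≤ j) (hji : j < i + minimalPeriod π x) :
    Set.MapsTo (π * swap (π^[i] x) (π^[j] x))
      ((π^[·] x) '' Set.Ioc j (i + minimalPeriod π x))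
      ((π^[·] x) '' Set.Ioc j (i + minimalPeriod π x)) := by
  rintro _ ⟨m, ⟨hjm, hmi⟩, rfl⟩
  rcases hmi.lt_or_eq with hlt | rfl
  · exact ⟨m + 1, ⟨by omega, hlt⟩, (mul_swap_apply_iterate_of_mem_Ioo π x hij ⟨hjm, hlt⟩).symm⟩
  · refine ⟨j + 1, ⟨by omega, by omega⟩, ?_⟩
    dsimp only
    rw [iterate_add_minimalPeriod_eq, Perm.mul_apply, swap_apply_left, iterate_succ_apply']

end CycleSplitting

theorem exists_down_up_crossing {β : Type*} [LinearOrder β] {f : ℕ → β} {L : ℕ} (hL : 0 < L)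
    (hf : ∀ k, f (k + L) = f k) {s : β} (h₀ : s < f 0) (hs : ∃ k, f k ≤ s) :
    ∃ i j, i < j ∧ j < L ∧ s < f i ∧ f (i + 1) ≤ s ∧ f j ≤ s ∧
      ∀ m ∈ Set.Ioc j (i + L), s < f m := by
  classical
  have hex : ∃ k, f (k + 1) ≤ s := by
    obtain ⟨_ | k, hk⟩ := hs
    · exact absurd hk h₀.not_ge
    · exact ⟨k, hk⟩
  set i := Nat.find hex
  have hbefore : ∀ m ≤ i, s < f m := by
    rintro (_ | m) hm
    · exact h₀
    · exact lt_of_not_ge (Nat.find_min hex (by omega))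
  set j := Nat.findGreatest (fun k => f k ≤ s) (i + L)
  have hj : f j ≤ s := Nat.findGreatest_spec (P := fun k => f k ≤ s) (m := i + 1) (by omega)
    (Nat.find_spec hex)
  have hij : i + 1 ≤ j := Nat.le_findGreatest (by omega) (Nat.find_spec hex)
  -- a point `≤ s` at index `j ≥ L` would repeat at index `j - L ≤ i`
  have hjL : j < L := by
    by_contra! h
    have hle : j ≤ i + L := Nat.findGreatest_le _
    have := hbefore (j - L) (by omega)
    rw [← hf, Nat.sub_add_cancel h] at this
    exact this.not_ge hj
  exact ⟨i, j, by omega, hjL, hbefore i le_rfl, Nat.find_spec hex, hj,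
    fun m hm => lt_of_not_ge (Nat.findGreatest_is_greatest hm.1 hm.2)⟩

section Box

variable {n W : ℕ}

theorem minCycle_eq_sInf_range (π : Perm (Box n)) (x : Box n) :
    minCycle π x = sInf (Set.range fun k : ℕ => (π^[k] x : ℤ)) := by
  refine congrArg sInf (Set.ext fun z => ⟨?_, ?_⟩)
  · rintro ⟨k, rfl⟩
    obtain ⟨i, hi⟩ := (show π.SameCycle x ((π ^ k) x) from ⟨k, rfl⟩).exists_nat_pow_eq
    exact ⟨i, by simp only [← Perm.coe_pow, hi]⟩
  · rintro ⟨k, rfl⟩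
    exact ⟨k, by rw [zpow_natCast, Perm.coe_pow]⟩

theorem bddBelow_range_iterate (π : Perm (Box n)) (x : Box n) :
    BddBelow (Set.range fun k : ℕ => (π^[k] x : ℤ)) :=
  ⟨-n, Set.forall_mem_range.2 fun k => (mem_Icc.1 (π^[k] x).2).1⟩

theorem minCycle_le_iterate (π : Perm (Box n)) (x : Box n) (k : ℕ) :
    minCycle π x ≤ (π^[k] x : ℤ) := by
  rw [minCycle_eq_sInf_range]
  exact csInf_le (bddBelow_range_iterate π x) ⟨k, rfl⟩

theorem exists_iterate_eq_minCycle (π : Perm (Box n)) (x : Box n) :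
    ∃ k : ℕ, (π^[k] x : ℤ) = minCycle π x := by
  rw [minCycle_eq_sInf_range]
  exact Int.csInf_mem (Set.range_nonempty _) (bddBelow_range_iterate π x)

theorem le_minCycle_of_mapsTo {π : Perm (Box n)} {A : Set (Box n)} (hA : Set.MapsTo π A A)
    {x : Box n} (hx : x ∈ A) {c : ℤ} (hc : ∀ y ∈ A, c ≤ y) : c ≤ minCycle π x := by
  rw [minCycle_eq_sInf_range]
  exact le_csInf (Set.range_nonempty _) (Set.forall_mem_range.2 fun k => hc _ (hA.iterate k hx))

theorem mul_swap_mem_SW {π : Perm (Box n)} (hπ : π ∈ SW n W) {a b : Box n}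
    (ha : |(π b : ℤ) - a| ≤ W) (hb : |(π a : ℤ) - b| ≤ W) : π * swap a b ∈ SW n W := by
  intro y
  rw [Perm.mul_apply]
  rcases eq_or_ne y a with rfl | hya
  · rwa [swap_apply_left]
  rcases eq_or_ne y b with rfl | hyb
  · rwa [swap_apply_right]
  rw [swap_apply_of_ne_of_ne hya hyb]
  exact hπ y

theorem exists_mul_swap_minCycle_mem_Ioc {π : Perm (Box n)} (hπ : π ∈ SW n W) {x : Box n}
    {s : ℤ} (hx : s < x) (hmin : minCycle π x ≤ s) :
    ∃ a b : Box n, (a : ℤ) ∈ Ioc s (s + W) ∧ (b : ℤ) ∈ Ioc (s - W) s ∧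
      π * swap a b ∈ SW n W ∧ minCycle (π * swap a b) x ∈ Ioc s (s + W) := by
  have hstep (k : ℕ) : |(π^[k + 1] x : ℤ) - π^[k] x| ≤ W := by
    rw [iterate_succ_apply']
    exact hπ _
  obtain ⟨i, j, hij, hjL, hi, hi₁, hj, hafter⟩ :=
    exists_down_up_crossing (f := fun k => (π^[k] x : ℤ)) (π.minimalPeriod_pos x)
      (fun k => by simp only [iterate_add_minimalPeriod_eq]) hx
      ((exists_iterate_eq_minCycle π x).imp fun k hk => hk.le.trans hmin)
  have hj₁ := hafter (j + 1) ⟨by omega, by omega⟩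
  have hsi := abs_le.1 (hstep i)
  have hsj := abs_le.1 (hstep j)
  have hx_mem : x ∈ (π^[·] x) '' Set.Ioc j (i + minimalPeriod π x) :=
    ⟨minimalPeriod π x, ⟨hjL, by omega⟩, iterate_minimalPeriod⟩
  have horbit : (π * swap (π^[i] x) (π^[j] x))^[i] x = π^[i] x := by
    have := iterate_mul_swap_apply_iterate π x hij.le hjL (k := i) (by omega)
    rwa [iterate_minimalPeriod, add_comm, iterate_add_minimalPeriod_eq] at this
  refine ⟨π^[i] x, π^[j] x, mem_Ioc.2 ⟨hi, by linarith⟩, mem_Ioc.2 ⟨by linarith, hj⟩,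
    mul_swap_mem_SW hπ ?_ ?_, mem_Ioc.2 ⟨?_, ?_⟩⟩
  iterate 2
    rw [← iterate_succ_apply' π]
    exact abs_le.2 ⟨by linarith, by linarith⟩
  · refine Int.lt_iff_add_one_le.2 (le_minCycle_of_mapsTo
      (mapsTo_mul_swap_arc π x hij.le (by omega)) hx_mem ?_)
    rintro _ ⟨m, hm, rfl⟩
    exact hafter m hm
  · calc minCycle _ x ≤ _ := minCycle_le_iterate _ x i
      _ ≤ s + W := by rw [horbit]; linarith

theorem card_filter_coe_mem_Ioc_le (u v : ℤ) :
    (univ.filter fun a : Box n => (a : ℤ) ∈ Ioc u v).card ≤ (v - u).toNat :=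
  (card_le_card_of_injOn Subtype.val (fun _ ha => (mem_filter.1 ha).2)
    Subtype.val_injective.injOn).trans (Int.card_Ioc u v).le

theorem unifProb_le_sq_mul_of_exists_mul_swap {E F : Set (Perm (Box n))} (u : ℤ)
    (h : ∀ π ∈ SW n W, π ∈ E → ∃ a b : Box n, (a : ℤ) ∈ Ioc u (u + W) ∧
      (b : ℤ) ∈ Ioc (u - W) u ∧ π * swap a b ∈ SW n W ∧ π * swap a b ∈ F) :
    unifProb W n E ≤ W ^ 2 * unifProb W n F := by
  classical
  rw [unifProb, unifProb, ← mul_div_assoc]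
  refine div_le_div_of_nonneg_right ?_ (Nat.cast_nonneg _)
  set Ia := univ.filter fun a : Box n => (a : ℤ) ∈ Ioc u (u + W)
  set Ib := univ.filter fun b : Box n => (b : ℤ) ∈ Ioc (u - W) u
  have hIa : Ia.card ≤ W := (card_filter_coe_mem_Ioc_le _ _).trans (by omega)
  have hIb : Ib.card ≤ W := (card_filter_coe_mem_Ioc_le _ _).trans (by omega)
  norm_cast
  -- `π ↦ (π * swap a b, a, b)` is injective, as `swap a b` is an involution
  calc _ ≤ (((univ.filter fun π => π ∈ SW n W ∧ π ∈ F) ×ˢ Ia ×ˢ Ib).image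
          fun p => p.1 * swap p.2.1 p.2.2).card := by
        refine card_le_card fun π hπ => ?_
        obtain ⟨hπ, hE⟩ := (mem_filter.1 hπ).2
        obtain ⟨a, b, ha, hb, hσ, hF⟩ := h π hπ hE
        refine mem_image.2 ⟨(π * swap a b, a, b), ?_, by simp [mul_assoc]⟩
        simp only [Ia, Ib, mem_product, mem_filter, mem_univ, true_and]
        exact ⟨⟨hσ, hF⟩, ha, hb⟩
    _ ≤ _ * (Ia.card * Ib.card) := card_image_le.trans (by rw [card_product, card_product])
    _ ≤ _ * (W * W) := by gcongr
    _ = W ^ 2 * _ := by ring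

end Box

/-- There is a universal constant `C > 0` such that for all integers
`n, W ≥ 1` and every real `λ ≥ 0`,
`P_{∞,W,n}(min C_π(0) < -λ - 2W) ≤ C W² P_{∞,W,n}(min C_π(0) ∈ [-λ - 2W, -λ))`. -/
theorem one_step_min_uniform :
    ∃ C : ℝ, 0 < C ∧ ∀ (n W : ℕ), 1 ≤ n → 1 ≤ W → ∀ lam : ℝ, 0 ≤ lam →
      unifProb W n {π | ((minCycle π (boxZero n) : ℤ) : ℝ) < -lam - 2 * W} ≤
        C * W ^ 2 *
          unifProb W n {π | -lam - 2 * W ≤ ((minCycle π (boxZero n) : ℤ) : ℝ) ∧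
            ((minCycle π (boxZero n) : ℤ) : ℝ) < -lam} := by
  refine ⟨1, one_pos, fun n W _ _ lam hlam => ?_⟩
  set s : ℤ := ⌈-lam⌉ - W - 1
  have hceil := Int.le_ceil (-lam)
  have hs : s < (boxZero n : ℤ) := by
    have : ⌈-lam⌉ ≤ 0 := Int.ceil_le.2 (by simpa using hlam)
    show s < 0
    omega
  have hlow (m : ℤ) (hm : (m : ℝ) < -lam - 2 * W) : m ≤ s := by
    have : (m : ℝ) < ((⌈-lam⌉ - 2 * W : ℤ) : ℝ) := by push_cast; linarith
    have := Int.cast_lt.1 this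
    omega
  have hwindow (m : ℤ) (hm : m ∈ Ioc s (s + W)) : -lam - 2 * W ≤ (m : ℝ) ∧ (m : ℝ) < -lam := by
    obtain ⟨h₁, h₂⟩ := mem_Ioc.1 hm
    have h₁' : ((⌈-lam⌉ - W : ℤ) : ℝ) ≤ m := Int.cast_le.2 (by omega)
    have h₂' : (m : ℝ) ≤ ((⌈-lam⌉ - 1 : ℤ) : ℝ) := Int.cast_le.2 (by omega)
    push_cast at h₁' h₂'
    constructor <;> linarith [Int.ceil_lt_add_one (-lam)]
  rw [one_mul]
  refine unifProb_le_sq_mul_of_exists_mul_swap s fun π hπ hA => ?_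
  obtain ⟨a, b, ha, hb, hσ, hσmin⟩ := exists_mul_swap_minCycle_mem_Ioc hπ hs (hlow _ hA)
  exact ⟨a, b, ha, hb, hσ, hwindow _ hσmin⟩
end

section
/- There exists a universal constant C > 0 such that for every p ∈ [1,∞), all integers n, W ≥ 1, and every integer λ ≥ 1, P_{p,W,n}(max C_π(0) > λ) ≤ C·W²·Σ_{j=0}^{λ} exp(−(λ − j)^p / W^p)·P_{p,W,n}(max C_π(0) = j). -/
open Finset

/-!
Let `π` be a permutation whose cycle through `0` rises above `λ`. Let `A` be the point where this
cycle first jumps above `λ` and `C` the point from which it last jumps back. Then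
`σ = π * swap A C` splits the cycle, and the cycle of `0` in `σ` stays in `[-n, λ]`; call its
maximum `j`. Since `t ↦ t ^ p` is superadditive, the two uncrossed jumps cost at least
`(λ - j) ^ p + f₁ ^ p + f₂ ^ p` more than the two new ones, where `f₁` and `f₂` are the distances
of the jump endpoints from the levels `j` and `λ + 1`. The permutation `π` can be recovered from
`σ`, `f₁`, `f₂` and two bits. So the Gibbs weight of `{max C_π(0) > λ}` is at most the weight of
`{max C_σ(0) = j}` times `exp (-(λ - j) ^ p / W ^ p)`, summed over `j ≤ λ`, and times
`4 (∑_f exp (-f ^ p / W ^ p)) ^ 2 = O(W ^ 2)`.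
-/


section Inequalities

open Real

variable {p : ℝ}

lemma rpow_add_rpow_le_of_add_eq (hp : 1 ≤ p) {a b c : ℝ} (ha : 0 ≤ a) (hb : 0 ≤ b)
    (h : a + b = c) : a ^ p + b ^ p ≤ c ^ p :=
  h ▸ add_rpow_le_rpow_add ha hb hp

lemma rpow_add_rpow_add_rpow_le_of_add_eq (hp : 1 ≤ p) {a b c d : ℝ} (ha : 0 ≤ a) (hb : 0 ≤ b)
    (hc : 0 ≤ c) (h : a + b + c = d) : a ^ p + b ^ p + c ^ p ≤ d ^ p :=
  (add_le_add_left (add_rpow_le_rpow_add ha hb hp) _).trans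
    (rpow_add_rpow_le_of_add_eq hp (add_nonneg ha hb) hc h)

/-- Uncrossing the jumps `a ↦ a'`, `c ↦ c'` into `a ↦ c'`, `c ↦ a'` saves at least twice the
`p`-th power of their overlap. -/
lemma abs_rpow_add_abs_rpow_add_two_mul_le (hp : 1 ≤ p) {a a' c c' : ℝ}
    (h : max a c' ≤ min c a') :
    |c' - a| ^ p + |a' - c| ^ p + 2 * (min c a' - max a c') ^ p ≤ |a' - a| ^ p + |c' - c| ^ p := by
  rw [abs_of_nonneg (a := a' - a) (by linarith [le_max_left a c', min_le_right c a']),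
    abs_of_nonpos (a := c' - c) (by linarith [le_max_right a c', min_le_left c a']), neg_sub,
    abs_sub_comm c' a]
  rcases le_total a c' with hac | hac <;> rcases le_total c a' with hca | hca
  · rw [max_eq_right hac, min_eq_left hca] at h ⊢
    rw [abs_of_nonpos (by linarith), abs_of_nonneg (by linarith), neg_sub]
    have := rpow_add_rpow_add_rpow_le_of_add_eq hp (sub_nonneg.2 hac) (sub_nonneg.2 h)
      (sub_nonneg.2 hca) (show c' - a + (c - c') + (a' - c) = a' - a by ring)
    linarith
  · rw [max_eq_right hac, min_eq_right hca] at h ⊢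
    rw [abs_of_nonpos (by linarith), abs_of_nonpos (by linarith), neg_sub, neg_sub]
    have h₁ := rpow_add_rpow_le_of_add_eq hp (sub_nonneg.2 hac) (sub_nonneg.2 h)
      (show c' - a + (a' - c') = a' - a by ring)
    have h₂ := rpow_add_rpow_le_of_add_eq hp (sub_nonneg.2 h) (sub_nonneg.2 hca)
      (show a' - c' + (c - a') = c - c' by ring)
    linarith
  · rw [max_eq_left hac, min_eq_left hca] at h ⊢
    rw [abs_of_nonneg (by linarith), abs_of_nonneg (by linarith)]
    have h₁ := rpow_add_rpow_le_of_add_eq hp (sub_nonneg.2 h) (sub_nonneg.2 hca)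
      (show c - a + (a' - c) = a' - a by ring)
    have h₂ := rpow_add_rpow_le_of_add_eq hp (sub_nonneg.2 hac) (sub_nonneg.2 h)
      (show a - c' + (c - a) = c - c' by ring)
    linarith
  · rw [max_eq_left hac, min_eq_right hca] at h ⊢
    rw [abs_of_nonneg (by linarith), abs_of_nonpos (by linarith), neg_sub]
    have := rpow_add_rpow_add_rpow_le_of_add_eq hp (sub_nonneg.2 hac) (sub_nonneg.2 h)
      (sub_nonneg.2 hca) (show a - c' + (a' - a) + (c - a') = c - c' by ring)
    linarith

lemma uncross_cost_le (hp : 1 ≤ p) {lam j a a' c c' : ℝ} (hj : j ≤ lam) (ha : a ≤ j)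
    (hc' : c' ≤ j) (ha' : lam + 1 ≤ a') (hc : lam + 1 ≤ c) :
    (lam - j) ^ p + (j - max a c') ^ p + (min c a' - (lam + 1)) ^ p + |c' - a| ^ p + |a' - c| ^ p
      ≤ |a' - a| ^ p + |c' - c| ^ p := by
  have hlo : max a c' ≤ j := max_le ha hc'
  have hhi : lam + 1 ≤ min c a' := le_min hc ha'
  have hgap : (lam - j) ^ p + (j - max a c') ^ p + (min c a' - (lam + 1)) ^ p
      ≤ (min c a' - max a c') ^ p :=
    (rpow_add_rpow_add_rpow_le_of_add_eq hp (by linarith) (by linarith) (by linarith) rfl).trans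
      (rpow_le_rpow (by linarith) (by linarith) (by linarith))
  have hswap := abs_rpow_add_abs_rpow_add_two_mul_le hp (show max a c' ≤ min c a' by linarith)
  have : 0 ≤ (min c a' - max a c') ^ p := rpow_nonneg (by linarith) _
  linarith

lemma sub_one_le_rpow (hp : 1 ≤ p) {x : ℝ} (hx : 0 ≤ x) : x - 1 ≤ x ^ p := by
  rcases le_total 1 x with h | h
  · linarith [self_le_rpow_of_one_le h hp]
  · linarith [rpow_nonneg hx p]

lemma sum_range_exp_neg_rpow_div_le (hp : 1 ≤ p) {W : ℝ} (hW : 0 < W) (M : ℕ) :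
    ∑ f ∈ range M, exp (-(f : ℝ) ^ p / W ^ p) ≤ exp 1 * (W + 1) := by
  set r := exp (-W⁻¹) with hr_def
  -- `x - 1 ≤ x ^ p` compares the terms with the geometric series `e * r ^ f`
  have hterm (f : ℕ) : exp (-(f : ℝ) ^ p / W ^ p) ≤ exp 1 * r ^ f := by
    rw [← exp_nat_mul, ← exp_add, neg_div, ← div_rpow (Nat.cast_nonneg f) hW.le]
    have := sub_one_le_rpow hp (div_nonneg (Nat.cast_nonneg f) hW.le)
    exact exp_le_exp.2 (by rw [div_eq_mul_inv] at this ⊢; linarith)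
  have hr : r ≤ (W⁻¹ + 1)⁻¹ := by
    rw [hr_def, exp_neg]; exact inv_anti₀ (by positivity) (add_one_le_exp _)
  have hgap : (W + 1)⁻¹ ≤ 1 - r := by
    have : (W⁻¹ + 1)⁻¹ = 1 - (W + 1)⁻¹ := by field_simp; ring
    linarith
  calc ∑ f ∈ range M, exp (-(f : ℝ) ^ p / W ^ p) ≤ ∑ f ∈ range M, exp 1 * r ^ f :=
        sum_le_sum fun f _ ↦ hterm f
    _ = exp 1 * ∑ f ∈ range M, r ^ f := (mul_sum ..).symm
    _ ≤ exp 1 * (1 - r)⁻¹ := by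
        have hr1 : r < 1 := by linarith [inv_pos.2 (by linarith : 0 < W + 1)]
        have := geom_sum_Ico_le_of_lt_one (m := 0) (n := M) (exp_pos _).le hr1
        rw [← range_eq_Ico, pow_zero, one_div] at this
        exact mul_le_mul_of_nonneg_left this (exp_pos 1).le
    _ ≤ exp 1 * (W + 1) := by
        gcongr; simpa using inv_anti₀ (by positivity) hgap

end Inequalities

lemma Nat.exists_forall_le_not_and_succ {Q : ℕ → Prop} (h₀ : ¬Q 0) (h : ∃ m, Q m) :
    ∃ i, (∀ k ≤ i, ¬Q k) ∧ Q (i + 1) := by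
  classical
  have hsucc : ∃ m, Q (m + 1) := by
    obtain ⟨_ | m, hm⟩ := h
    · exact absurd hm h₀
    · exact ⟨m, hm⟩
  refine ⟨Nat.find hsucc, fun k hk ↦ ?_, Nat.find_spec hsucc⟩
  rcases k with _ | k
  · exact h₀
  · exact Nat.find_min hsucc (by omega)

lemma Finset.sum_le_sum_of_forall_exists_le {ι κ M : Type*} [DecidableEq ι] [AddCommMonoid M]
    [PartialOrder M] [IsOrderedAddMonoid M] {s : Finset ι} {t : Finset κ} {f : ι → M}
    {g : κ → M} (d : κ → ι) (hg : ∀ k ∈ t, 0 ≤ g k)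
    (h : ∀ i ∈ s, ∃ k ∈ t, d k = i ∧ f i ≤ g k) : ∑ i ∈ s, f i ≤ ∑ k ∈ t, g k :=
  calc ∑ i ∈ s, f i ≤ ∑ i ∈ s, ∑ k ∈ t with d k = i, g k := sum_le_sum fun i hi ↦ by
        obtain ⟨k, hk, rfl, hle⟩ := h i hi
        exact hle.trans (single_le_sum (fun k' hk' ↦ hg k' (mem_filter.1 hk').1)
          (mem_filter.2 ⟨hk, rfl⟩))
    _ ≤ ∑ k ∈ t, g k :=
        sum_fiberwise_le_sum_of_sum_fiber_nonneg fun _ _ ↦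
          sum_nonneg fun k hk ↦ hg k (mem_filter.1 hk).1

namespace Equiv.Perm

variable {α : Type*} [DecidableEq α]

lemma sum_mul_swap_add {M : Type*} [Fintype α] [AddCommGroup M] (f : α → α → M) (π : Perm α)
    {a c : α} (hac : a ≠ c) :
    ∑ i, f ((π * swap a c) i) i + f (π a) a + f (π c) c
      = ∑ i, f (π i) i + f (π c) a + f (π a) c := by
  have hdiff := Fintype.sum_eq_add a c hac
    (f := fun i ↦ f ((π * swap a c) i) i - f (π i) i)
    (fun i ⟨hia, hic⟩ ↦ by simp [swap_apply_of_ne_of_ne hia hic])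
  simp only [sum_sub_distrib, mul_apply, swap_apply_left, swap_apply_right,
    sub_eq_iff_eq_add] at hdiff ⊢
  rw [hdiff]
  abel

variable {π : Perm α} {x A C : α} {P : α → Prop} {i j : ℕ}

lemma mul_swap_apply_of_not (hA : P (π A)) (hC : P C) {y : α} (hy : ¬P y) (hπy : ¬P (π y)) :
    (π * swap A C) y = π y := by
  have hyA : y ≠ A := by rintro rfl; exact hπy hA
  have hyC : y ≠ C := by rintro rfl; exact hy hC
  rw [mul_apply, swap_apply_of_ne_of_ne hyA hyC]

lemma mul_swap_pow_apply_of_forall_le_not (hi : ∀ k ≤ i, ¬P ((π ^ k) x)) (hA : P (π A))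
    (hC : P C) {k : ℕ} (hk : k < i) : (π * swap A C) ((π ^ k) x) = (π ^ (k + 1)) x := by
  rw [pow_succ', mul_apply]
  exact mul_swap_apply_of_not hA hC (hi k hk.le) (by rw [← mul_apply, ← pow_succ']; exact hi _ hk)

lemma sameCycle_mul_swap_pow_apply (hi : ∀ k ≤ i, ¬P ((π ^ k) x)) (hA : P (π ((π ^ i) x)))
    (hC : P C) : (π * swap ((π ^ i) x) C).SameCycle x ((π ^ i) x) := by
  suffices ∀ k ≤ i, (π * swap ((π ^ i) x) C).SameCycle x ((π ^ k) x) from this i le_rfl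
  intro k hk
  induction k with
  | zero => rfl
  | succ k ih =>
    rw [← mul_swap_pow_apply_of_forall_le_not hi hA hC hk]
    exact sameCycle_apply_right.2 (ih (by omega))

lemma not_of_sameCycle_mul_swap [Finite α] (hi : ∀ k ≤ i, ¬P ((π ^ k) x))
    (hA : P (π ((π ^ i) x))) (hj : ∀ k ≤ j, ¬P ((π⁻¹ ^ k) x)) (hC : P ((π⁻¹ ^ (j + 1)) x))
    {y : α} (hy : (π * swap ((π ^ i) x) ((π⁻¹ ^ (j + 1)) x)).SameCycle x y) : ¬P y := by
  set σ := π * swap ((π ^ i) x) ((π⁻¹ ^ (j + 1)) x)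
  have hπ_inv_pow (k : ℕ) : π ((π⁻¹ ^ (k + 1)) x) = (π⁻¹ ^ k) x := by
    rw [pow_succ', mul_apply]; exact π.apply_symm_apply _
  -- the σ-cycle of `x` stays in the arc of the π-cycle of `x` from `π⁻¹ ^ j x` to `π ^ i x`
  let O : Set α := {y | (∃ k ≤ i, (π ^ k) x = y) ∨ ∃ k ≤ j, (π⁻¹ ^ k) x = y}
  have hσ_forward {k : ℕ} (hk : k ≤ i) : σ ((π ^ k) x) ∈ O := by
    rcases hk.lt_or_eq with hk | rfl
    · exact .inl ⟨k + 1, hk, (mul_swap_pow_apply_of_forall_le_not hi hA hC hk).symm⟩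
    · rw [mul_apply, swap_apply_left, hπ_inv_pow j]
      exact .inr ⟨j, le_rfl, rfl⟩
  have hσO : ∀ y ∈ O, σ y ∈ O := by
    rintro _ (⟨k, hk, rfl⟩ | ⟨_ | k, hk, rfl⟩)
    · exact hσ_forward hk
    · exact hσ_forward (Nat.zero_le i)
    · rw [mul_swap_apply_of_not hA hC (hj _ hk) (by rw [hπ_inv_pow]; exact hj k (by omega)),
        hπ_inv_pow]
      exact .inr ⟨k, by omega, rfl⟩
  have hσ_pow_mem (m : ℕ) : (σ ^ m) x ∈ O := by
    induction m with
    | zero => exact .inl ⟨0, Nat.zero_le i, rfl⟩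
    | succ m ih => rw [pow_succ', mul_apply]; exact hσO _ ih
  obtain ⟨m, -, rfl⟩ := hy.exists_pow_eq'
  obtain ⟨k, hk, hkm⟩ | ⟨k, hk, hkm⟩ := hσ_pow_mem m
  exacts [hkm ▸ hi k hk, hkm ▸ hj k hk]

/-- If the cycle of `x` leaves `{y | ¬P y}`, let `A` be the point where it first leaves and `C`
the point from which it last comes back: swapping them closes off a cycle through `x` and `A`
inside `{y | ¬P y}`. -/
lemma exists_swap_sameCycle_forall_not [Finite α] (π : Perm α) (hx : ¬P x)
    (hP : ∃ y, π.SameCycle x y ∧ P y) :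
    ∃ A C, ¬P A ∧ P (π A) ∧ P C ∧ ¬P (π C) ∧ (π * swap A C).SameCycle x A ∧
      ∀ y, (π * swap A C).SameCycle x y → ¬P y := by
  obtain ⟨y, hxy, hy⟩ := hP
  obtain ⟨i, hi, hA⟩ := Nat.exists_forall_le_not_and_succ (Q := fun k ↦ P ((π ^ k) x)) hx
    (by obtain ⟨m, -, rfl⟩ := hxy.exists_pow_eq'; exact ⟨m, hy⟩)
  obtain ⟨j, hj, hC⟩ := Nat.exists_forall_le_not_and_succ (Q := fun k ↦ P ((π⁻¹ ^ k) x)) hx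
    (by obtain ⟨m, -, rfl⟩ := (sameCycle_inv.2 hxy).exists_pow_eq'; exact ⟨m, hy⟩)
  rw [pow_succ', mul_apply] at hA
  have hπC : π ((π⁻¹ ^ (j + 1)) x) = (π⁻¹ ^ j) x := by
    rw [pow_succ', mul_apply]; exact π.apply_symm_apply _
  exact ⟨_, _, hi i le_rfl, hA, hC, hπC ▸ hj j le_rfl, sameCycle_mul_swap_pow_apply hi hA hC,
    fun y ↦ not_of_sameCycle_mul_swap hi hA hj hC⟩

end Equiv.Perm

open Equiv

section

variable {n : ℕ}

lemma bddAbove_coe_zpow_apply (π : Perm (Box n)) (j : Box n) :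
    BddAbove {x : ℤ | ∃ k : ℤ, (((π ^ k) j : Box n) : ℤ) = x} :=
  ⟨n, by rintro _ ⟨k, rfl⟩; exact (mem_Icc.1 ((π ^ k) j).2).2⟩

lemma le_maxCycle {π : Perm (Box n)} {j y : Box n} (h : π.SameCycle j y) :
    (y : ℤ) ≤ maxCycle π j := by
  obtain ⟨k, rfl⟩ := h
  exact le_csSup (bddAbove_coe_zpow_apply π j) ⟨k, rfl⟩

lemma maxCycle_le {π : Perm (Box n)} {j : Box n} {b : ℤ}
    (h : ∀ y, π.SameCycle j y → (y : ℤ) ≤ b) : maxCycle π j ≤ b :=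
  csSup_le ⟨_, 0, rfl⟩ (by rintro _ ⟨k, rfl⟩; exact h _ ⟨k, rfl⟩)

lemma exists_sameCycle_coe_eq_maxCycle (π : Perm (Box n)) (j : Box n) :
    ∃ y, π.SameCycle j y ∧ (y : ℤ) = maxCycle π j := by
  have hmem : maxCycle π j ∈ {x : ℤ | ∃ k : ℤ, (((π ^ k) j : Box n) : ℤ) = x} :=
    Int.csSup_mem ⟨_, 0, rfl⟩ (bddAbove_coe_zpow_apply π j)
  obtain ⟨k, hk⟩ := hmem
  exact ⟨(π ^ k) j, ⟨k, rfl⟩, hk⟩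

lemma exists_swap_maxCycle_le (π : Perm (Box n)) {lam : ℕ}
    (h : (lam : ℤ) < maxCycle π (boxZero n)) :
    ∃ A C : Box n, maxCycle (π * swap A C) (boxZero n) ≤ lam ∧
      (A : ℤ) ≤ maxCycle (π * swap A C) (boxZero n) ∧
      (π C : ℤ) ≤ maxCycle (π * swap A C) (boxZero n) ∧
      (lam : ℤ) + 1 ≤ π A ∧ (lam : ℤ) + 1 ≤ C := by
  obtain ⟨y, hy, hy_max⟩ := exists_sameCycle_coe_eq_maxCycle π (boxZero n)
  obtain ⟨A, C, -, hA', hC, -, hA, hσ⟩ := π.exists_swap_sameCycle_forall_not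
    (P := fun y : Box n ↦ (lam : ℤ) < y) (by simp [boxZero]) ⟨y, hy, hy_max ▸ h⟩
  have hσA : (π * swap A C) A = π C := by simp
  exact ⟨A, C, maxCycle_le fun y hy ↦ not_lt.1 (hσ y hy), le_maxCycle hA,
    hσA ▸ le_maxCycle (Perm.sameCycle_apply_right.2 hA), hA', hC⟩

noncomputable def dispCost (p : ℝ) (π : Perm (Box n)) : ℝ :=
  ∑ i, |((π i : ℤ) : ℝ) - ((i : ℤ) : ℝ)| ^ p

lemma dispCost_mul_swap_add_le {p : ℝ} (hp : 1 ≤ p) (π : Perm (Box n)) {A C : Box n}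
    {lam j : ℝ} (hj : j ≤ lam) (hA : ((A : ℤ) : ℝ) ≤ j) (hC' : ((π C : ℤ) : ℝ) ≤ j)
    (hA' : lam + 1 ≤ ((π A : ℤ) : ℝ)) (hC : lam + 1 ≤ ((C : ℤ) : ℝ)) :
    dispCost p (π * swap A C) + (lam - j) ^ p + (j - max ((A : ℤ) : ℝ) ((π C : ℤ) : ℝ)) ^ p
      + (min ((C : ℤ) : ℝ) ((π A : ℤ) : ℝ) - (lam + 1)) ^ p ≤ dispCost p π := by
  have hAC : A ≠ C := by rintro rfl; linarith
  have hswap := π.sum_mul_swap_add (fun a b : Box n ↦ |((a : ℤ) : ℝ) - ((b : ℤ) : ℝ)| ^ p) hAC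
  have hcost := uncross_cost_le hp hj hA hC' hA' hC
  simp only [dispCost] at hswap ⊢
  linarith

noncomputable def toBox (n : ℕ) (z : ℤ) : Box n :=
  if h : z ∈ Finset.Icc (-(n : ℤ)) n then ⟨z, h⟩ else boxZero n

lemma toBox_coe (x : Box n) : toBox n x = x := dif_pos x.2

/-- `π = σ * swap A C` is recovered from `σ = π * swap A C`, the offsets
`f₁ = maxCycle σ 0 - max A (π C)`, `f₂ = min C (π A) - (lam + 1)`, and two bits saying whether
the max is attained at `A` and the min at `C`: since `σ A = π C` and `σ C = π A`, the other
point is the `σ`-preimage. -/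
noncomputable def uncrossDecode (lam : ℕ) : Perm (Box n) × ℕ × ℕ × Bool × Bool → Perm (Box n)
  | (σ, f₁, f₂, b₁, b₂) =>
    σ * swap
      (if b₁ then toBox n (maxCycle σ (boxZero n) - f₁)
        else σ⁻¹ (toBox n (maxCycle σ (boxZero n) - f₁)))
      (if b₂ then toBox n (lam + 1 + f₂) else σ⁻¹ (toBox n (lam + 1 + f₂)))

noncomputable def uncrossCodes (n lam : ℕ) : Finset (Perm (Box n) × ℕ × ℕ × Bool × Bool) :=
  univ ×ˢ range (n + lam + 1) ×ˢ range (n + lam + 1) ×ˢ univ ×ˢ univ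

lemma ite_toBox_max_eq (σ : Perm (Box n)) (y : Box n) :
    (if decide ((σ y : ℤ) ≤ y) then toBox n (max (y : ℤ) (σ y))
      else σ⁻¹ (toBox n (max (y : ℤ) (σ y)))) = y := by
  by_cases h : (σ y : ℤ) ≤ y
  · simp [h, toBox_coe]
  · simp [h, max_eq_right (not_le.1 h).le, toBox_coe]

lemma ite_toBox_min_eq (σ : Perm (Box n)) (y : Box n) :
    (if decide ((y : ℤ) ≤ σ y) then toBox n (min (y : ℤ) (σ y))
      else σ⁻¹ (toBox n (min (y : ℤ) (σ y)))) = y := by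
  by_cases h : (y : ℤ) ≤ σ y
  · simp [h, toBox_coe]
  · simp [h, min_eq_right (not_le.1 h).le, toBox_coe]

lemma exists_uncrossDecode_eq {p : ℝ} (hp : 1 ≤ p) (π : Perm (Box n)) {lam : ℕ}
    (h : (lam : ℤ) < maxCycle π (boxZero n)) :
    ∃ σ : Perm (Box n), ∃ J f₁ f₂ : ℕ, ∃ b₁ b₂ : Bool, (σ, f₁, f₂, b₁, b₂) ∈ uncrossCodes n lam ∧
      uncrossDecode lam (σ, f₁, f₂, b₁, b₂) = π ∧ maxCycle σ (boxZero n) = J ∧ J ≤ lam ∧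
      dispCost p σ + (((lam : ℝ) - J) ^ p + (f₁ : ℝ) ^ p + (f₂ : ℝ) ^ p) ≤ dispCost p π := by
  obtain ⟨A, C, hJ_le, hAJ, hCJ, hA', hC⟩ := exists_swap_maxCycle_le π h
  set σ := π * swap A C
  have hσA : σ A = π C := by simp [σ]
  have hσC : σ C = π A := by simp [σ]
  obtain ⟨J, hJ⟩ : ∃ J : ℕ, maxCycle σ (boxZero n) = J :=
    Int.eq_ofNat_of_zero_le (le_maxCycle (Perm.SameCycle.refl σ (boxZero n)))
  have hA_box := mem_Icc.1 A.2
  have hC_box := mem_Icc.1 C.2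
  have hσA_box := mem_Icc.1 (σ A).2
  have hσC_box := mem_Icc.1 (σ C).2
  rw [← hσA, hJ] at hCJ
  rw [← hσC] at hA'
  rw [hJ] at hAJ hJ_le
  set lo : ℤ := max (A : ℤ) (σ A)
  set hi : ℤ := min (C : ℤ) (σ C)
  have hf₁ : ((J : ℤ) - lo).toNat = (J : ℤ) - lo := Int.toNat_of_nonneg (by omega)
  have hf₂ : (hi - (lam + 1)).toNat = hi - (lam + 1) := Int.toNat_of_nonneg (by omega)
  refine ⟨σ, J, ((J : ℤ) - lo).toNat, (hi - (lam + 1)).toNat, decide ((σ A : ℤ) ≤ A),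
    decide ((C : ℤ) ≤ σ C), ?_, ?_, hJ, by omega, ?_⟩
  · simp only [uncrossCodes, mem_product, mem_univ, mem_range, true_and, and_true]
    omega
  · have h₁ : (J : ℤ) - (((J : ℤ) - lo).toNat : ℤ) = lo := by omega
    have h₂ : (lam : ℤ) + 1 + ((hi - (lam + 1)).toNat : ℤ) = hi := by omega
    simp only [uncrossDecode, hJ, h₁, h₂]
    rw [ite_toBox_max_eq, ite_toBox_min_eq, mul_assoc, swap_mul_self, mul_one]
  · have hcost := dispCost_mul_swap_add_le hp π (lam := lam) (j := J) (A := A) (C := C)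
      (by exact_mod_cast hJ_le) (by exact_mod_cast hAJ) (by rw [← hσA]; exact_mod_cast hCJ)
      (by rw [← hσC]; exact_mod_cast hA') (by exact_mod_cast hC)
    have e₁ : ((((J : ℤ) - lo).toNat : ℕ) : ℝ) = J - max ((A : ℤ) : ℝ) ((π C : ℤ) : ℝ) := by
      rw [← hσA]; exact_mod_cast hf₁
    have e₂ : (((hi - (lam + 1)).toNat : ℕ) : ℝ)
        = min ((C : ℤ) : ℝ) ((π A : ℤ) : ℝ) - (lam + 1) := by
      rw [← hσC]; exact_mod_cast hf₂
    rw [e₁, e₂]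
    linarith

lemma gibbsWeight_le_mul_exp {p : ℝ} {W : ℕ} {π σ : Perm (Box n)} {a : ℝ}
    (h : dispCost p σ + a ≤ dispCost p π) :
    gibbsWeight p W n π ≤ gibbsWeight p W n σ * Real.exp (-a / (W : ℝ) ^ p) := by
  have := mul_le_mul_of_nonneg_left h (inv_nonneg.2 (Real.rpow_nonneg (Nat.cast_nonneg W) p))
  rw [gibbsWeight, gibbsWeight, ← Real.exp_add, Real.exp_le_exp,
    Real.rpow_neg (Nat.cast_nonneg W), neg_div, div_eq_inv_mul]
  simp only [dispCost] at this
  linarith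

open scoped Classical in
lemma gibbsProb_eq (p : ℝ) (W n : ℕ) (E : Set (Perm (Box n))) :
    gibbsProb p W n E = (∑ π with π ∈ E, gibbsWeight p W n π) / ∑ π, gibbsWeight p W n π := by
  rw [gibbsProb, sum_filter]

lemma sum_gibbsWeight_lt_maxCycle_le {p : ℝ} (hp : 1 ≤ p) {W : ℕ} (hW : 0 < W) (lam : ℕ) :
    ∑ π with (lam : ℤ) < maxCycle π (boxZero n), gibbsWeight p W n π ≤
      4 * (Real.exp 1 * (W + 1)) ^ 2 * ∑ j ∈ range (lam + 1),
        Real.exp (-((lam : ℝ) - j) ^ p / (W : ℝ) ^ p) *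
          ∑ σ with maxCycle σ (boxZero n) = j, gibbsWeight p W n σ := by
  set w := gibbsWeight p W n
  set E : ℕ → ℝ := fun f ↦ Real.exp (-(f : ℝ) ^ p / (W : ℝ) ^ p)
  set G : Perm (Box n) → ℝ := fun σ ↦ ∑ j ∈ range (lam + 1),
    Real.exp (-((lam : ℝ) - j) ^ p / (W : ℝ) ^ p) * if maxCycle σ (boxZero n) = j then w σ else 0
  have hG (σ : Perm (Box n)) : 0 ≤ G σ := sum_nonneg fun j _ ↦
    mul_nonneg (Real.exp_pos _).le (by split_ifs; exacts [(Real.exp_pos _).le, le_rfl])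
  calc _ ≤ ∑ d ∈ uncrossCodes n lam, E d.2.1 * E d.2.2.1 * G d.1 := by
        refine sum_le_sum_of_forall_exists_le (uncrossDecode lam)
          (fun _ _ ↦ mul_nonneg (by positivity) (hG _)) fun π hπ ↦ ?_
        obtain ⟨σ, J, f₁, f₂, b₁, b₂, hd, hdec, hJ, hJlam, hcost⟩ :=
          exists_uncrossDecode_eq hp π (mem_filter.1 hπ).2
        have hGσ : G σ = Real.exp (-((lam : ℝ) - J) ^ p / (W : ℝ) ^ p) * w σ := by
          simp [G, hJ, Nat.lt_succ_of_le hJlam]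
        refine ⟨_, hd, hdec, (gibbsWeight_le_mul_exp (W := W) hcost).trans_eq ?_⟩
        rw [hGσ]
        simp only [E, neg_add, add_div, Real.exp_add]
        ring
    _ = 4 * (∑ f ∈ range (n + lam + 1), E f) ^ 2 * ∑ σ, G σ := by
        simp only [uncrossCodes, sum_product, sum_const, card_product, card_univ,
          Fintype.card_bool, nsmul_eq_mul, ← sum_mul, ← mul_sum]
        ring
    _ ≤ 4 * (Real.exp 1 * (W + 1)) ^ 2 * ∑ σ, G σ := by
        gcongr
        · exact sum_nonneg fun σ _ ↦ hG σ
        · exact sum_range_exp_neg_rpow_div_le hp (by exact_mod_cast hW) _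
    _ = _ := by
        simp only [G]
        rw [sum_comm]
        simp [sum_filter, mul_sum]

end

/-- There is a universal constant `C > 0` such that for every
`p ∈ [1,∞)`, all integers `n, W ≥ 1` and every integer `λ ≥ 1`,
`P_{p,W,n}(max C_π(0) > λ) ≤ C W² Σ_{j=0}^{λ} exp(-(λ-j)^p / W^p) P_{p,W,n}(max C_π(0) = j)`. -/
theorem one_step_max_gibbs :
    ∃ C : ℝ, 0 < C ∧ ∀ (p : ℝ), 1 ≤ p → ∀ (n W : ℕ), 1 ≤ n → 1 ≤ W →
      ∀ lam : ℕ, 1 ≤ lam →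
        gibbsProb p W n {π | (lam : ℤ) < maxCycle π (boxZero n)} ≤
          C * W ^ 2 * ∑ j ∈ Finset.range (lam + 1),
            Real.exp (-((lam : ℝ) - (j : ℝ)) ^ p / (W : ℝ) ^ p) *
              gibbsProb p W n {π | maxCycle π (boxZero n) = (j : ℤ)} := by
  refine ⟨16 * Real.exp 2, by positivity, fun p hp n W _ hW lam _ ↦ ?_⟩
  have hZ : 0 < ∑ π, gibbsWeight p W n π := sum_pos (fun π _ ↦ Real.exp_pos _) univ_nonempty
  simp only [gibbsProb_eq, Set.mem_ofPred_eq, mul_div_assoc', ← sum_div]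
  rw [div_le_div_iff_of_pos_right hZ]
  convert (sum_gibbsWeight_lt_maxCycle_le hp hW lam).trans ?_ using 1
  have hW' : (W : ℝ) + 1 ≤ 2 * W := by
    have : (1 : ℝ) ≤ W := by exact_mod_cast hW
    linarith
  refine mul_le_mul_of_nonneg_right ?_
    (sum_nonneg fun j _ ↦ mul_nonneg (Real.exp_pos _).le (sum_nonneg fun σ _ ↦ (Real.exp_pos _).le))
  calc 4 * (Real.exp 1 * (W + 1)) ^ 2 ≤ 4 * (Real.exp 1 * (2 * W)) ^ 2 := by gcongr
    _ = 16 * Real.exp 2 * W ^ 2 := by rw [mul_pow, Real.exp_one_pow, Nat.cast_ofNat]; ring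
end
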